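/- arXiv:1804.08178 — 6 statements merged into one kernel-verified Lean document; each statement's English description precedes it below -/
import Mathlib

section
/- Let f : 2^E → ℝ≥0 be monotone submodular with f(∅)=0, let O* be an optimal solution to max{f(S) : |S| ≤ k}, and let S ⊆ E be a set such that f(S ∪ {e}) − f(S) ≤ θ/(2k) for all e ∈ E \ S, where θ ≤ f(O*). Then f(S) ≥ f(O*)/2. -/
/-!
By submodularity, `f (S ∪ O*) - f S` is at most the sum of the marginal gains of the elements
of `O*` over `S`, each at most `θ / (2k) ≤ f O* / (2k)`; there are at most `k` of them, and
`f O* ≤ f (S ∪ O*)` by monotonicity.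
-/

open Finset

lemma le_add_sum_insert_sub_of_submodular {E : Type*} [DecidableEq E] (f : Finset E → ℝ)
    (hsub : ∀ A B : Finset E, f (A ∪ B) + f (A ∩ B) ≤ f A + f B) (S A : Finset E) :
    f (S ∪ A) ≤ f S + ∑ e ∈ A, (f (insert e S) - f S) := by
  induction A using Finset.induction_on with
  | empty => simp
  | @insert e A heA ih =>
    rw [sum_insert heA]
    by_cases heS : e ∈ S
    · rw [union_insert, insert_eq_of_mem (mem_union_left A heS), insert_eq_of_mem heS]
      linarith
    · have hunion : (S ∪ A) ∪ insert e S = S ∪ insert e A := by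
        ext x; simp only [mem_union, mem_insert]; tauto
      have hinter : (S ∪ A) ∩ insert e S = S := by
        ext x; simp only [mem_inter, mem_union, mem_insert]
        constructor
        · rintro ⟨hx | hx, rfl | hx'⟩ <;> first | assumption | exact absurd hx heA
        · exact fun hx => ⟨Or.inl hx, Or.inr hx⟩
      have := hsub (S ∪ A) (insert e S)
      rw [hunion, hinter] at this
      linarith

lemma natCast_mul_div_two_mul_le {x : ℝ} (hx : 0 ≤ x) (k : ℕ) : k * (x / (2 * k)) ≤ x / 2 := by
  rcases k.eq_zero_or_pos with rfl | hk
  · simp only [CharP.cast_eq_zero, zero_mul]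
    positivity
  · field_simp
    rfl

theorem stmt_4_general {E : Type*} [DecidableEq E]
    (f : Finset E → ℝ)
    (hnonneg : ∀ S, 0 ≤ f S)
    (hmono : ∀ A B : Finset E, A ⊆ B → f A ≤ f B)
    (hsub : ∀ A B : Finset E, f (A ∪ B) + f (A ∩ B) ≤ f A + f B)
    (k : ℕ)
    (Ostar : Finset E) (hcard : Ostar.card ≤ k)
    (θ : ℝ) (hθ : θ ≤ f Ostar)
    (S : Finset E)
    (hgain : ∀ e : E, e ∉ S → f (insert e S) - f S ≤ θ / (2 * k)) :
    f S ≥ f Ostar / 2 := by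
  have hO := hnonneg Ostar
  have hmarginal : ∀ e ∈ Ostar, f (insert e S) - f S ≤ f Ostar / (2 * k) := by
    intro e _
    by_cases heS : e ∈ S
    · rw [insert_eq_of_mem heS, sub_self]
      positivity
    · exact (hgain e heS).trans (div_le_div_of_nonneg_right hθ (by positivity))
  have := calc
    f Ostar ≤ f (S ∪ Ostar) := hmono _ _ subset_union_right
    _ ≤ f S + ∑ e ∈ Ostar, (f (insert e S) - f S) :=
      le_add_sum_insert_sub_of_submodular f hsub S Ostar
    _ ≤ f S + Ostar.card * (f Ostar / (2 * k)) := by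
      gcongr
      simpa using sum_le_card_nsmul Ostar _ _ hmarginal
    _ ≤ f S + k * (f Ostar / (2 * k)) := by gcongr
    _ ≤ f S + f Ostar / 2 := by gcongr; exact natCast_mul_div_two_mul_le hO k
  linarith

/-- If all marginal gains over `S` are at most `θ/(2k)` with `θ ≤ f O*`,
then `f S ≥ f O* / 2`. -/
theorem stmt_4 {E : Type*} [Fintype E] [DecidableEq E]
    (f : Finset E → ℝ)
    (hnonneg : ∀ S, 0 ≤ f S)
    (hmono : ∀ A B : Finset E, A ⊆ B → f A ≤ f B)
    (hsub : ∀ A B : Finset E, f (A ∪ B) + f (A ∩ B) ≤ f A + f B)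
    (hempty : f ∅ = 0) (k : ℕ) (hk : 1 ≤ k)
    (Ostar : Finset E) (hcard : Ostar.card ≤ k)
    (hopt : ∀ T : Finset E, T.card ≤ k → f T ≤ f Ostar)
    (θ : ℝ) (hθ : θ ≤ f Ostar)
    (S : Finset E)
    (hgain : ∀ e : E, e ∉ S → f (insert e S) - f S ≤ θ / (2 * k)) :
    f S ≥ f Ostar / 2 :=
  stmt_4_general f hnonneg hmono hsub k Ostar hcard θ hθ S hgain
end

section
/- Let f : 2^E → ℝ≥0 be monotone submodular with f(∅)=0 and let O* be optimal for max{f(S) : |S| ≤ k}. Suppose S ⊆ E satisfies either (a) |S| = k and f(S) ≥ |S| · θ/(2k) with f(O*) ≤ (1+α)θ, or (b) f(S ∪ {e}) − f(S) < θ/(2k) for all e ∉ S with θ ≤ f(O*) ≤ (1+α)θ. Then in both cases f(S) ≥ f(O*)/(2(1+α)). -/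
/-!
Submodularity bounds the gain of adding all of `O*` to `S` by the sum of the single-element
gains, so if every such gain is below `θ / (2k)` then `f O* ≤ f S + θ / 2`, i.e. `θ / 2 ≤ f S`
once `θ ≤ f O*`. A full set of `k` elements each worth `θ / (2k)` also gives `θ / 2 ≤ f S`.
In both cases `f O* ≤ (1 + α) θ ≤ 2 (1 + α) f S`.
-/

section Submodular

variable {E : Type*} [DecidableEq E] (f : Finset E → ℝ)

lemma union_le_add_sum_marginal
    (hsub : ∀ A B : Finset E, f (A ∪ B) + f (A ∩ B) ≤ f A + f B) (S T : Finset E) :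
    f (S ∪ T) ≤ f S + ∑ e ∈ T, (f (insert e S) - f S) := by
  induction T using Finset.induction with
  | empty => simp
  | insert a T ha ih =>
    have hunion : insert a S ∪ (S ∪ T) = S ∪ insert a T := by
      ext x; simp only [Finset.mem_union, Finset.mem_insert]; tauto
    have hinter : insert a S ∩ (S ∪ T) = S := by
      ext x; simp only [Finset.mem_inter, Finset.mem_union, Finset.mem_insert]; grind
    have h := hsub (insert a S) (S ∪ T)
    rw [hunion, hinter] at h
    rw [Finset.sum_insert ha]
    linarith

lemma le_add_card_mul_of_marginal_le
    (hmono : ∀ A B : Finset E, A ⊆ B → f A ≤ f B)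
    (hsub : ∀ A B : Finset E, f (A ∪ B) + f (A ∩ B) ≤ f A + f B)
    {S : Finset E} {c : ℝ} (hc : 0 ≤ c) (hgain : ∀ e, e ∉ S → f (insert e S) - f S ≤ c)
    (T : Finset E) : f T ≤ f S + T.card * c := by
  have hterm : ∀ e ∈ T, f (insert e S) - f S ≤ c := by
    intro e _
    by_cases heS : e ∈ S
    · simpa [Finset.insert_eq_of_mem heS] using hc
    · exact hgain e heS
  calc f T ≤ f (S ∪ T) := hmono _ _ Finset.subset_union_right
    _ ≤ f S + ∑ e ∈ T, (f (insert e S) - f S) := union_le_add_sum_marginal f hsub S T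
    _ ≤ f S + T.card * c := by
      have := Finset.sum_le_card_nsmul T _ c hterm
      rw [nsmul_eq_mul] at this
      linarith

end Submodular

theorem stmt_5_general {E : Type*} [DecidableEq E]
    (f : Finset E → ℝ)
    (hnonneg : ∀ S, 0 ≤ f S)
    (hmono : ∀ A B : Finset E, A ⊆ B → f A ≤ f B)
    (hsub : ∀ A B : Finset E, f (A ∪ B) + f (A ∩ B) ≤ f A + f B)
    (k : ℕ) (hk : 1 ≤ k)
    (Ostar : Finset E) (hcard : Ostar.card ≤ k)
    (θ α : ℝ) (hα : 0 ≤ α)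
    (S : Finset E)
    (hcase :
      (S.card = k ∧ (S.card : ℝ) * θ / (2 * k) ≤ f S ∧ f Ostar ≤ (1 + α) * θ) ∨
      ((∀ e : E, e ∉ S → f (insert e S) - f S < θ / (2 * k)) ∧
        θ ≤ f Ostar ∧ f Ostar ≤ (1 + α) * θ)) :
    f S ≥ f Ostar / (2 * (1 + α)) := by
  have hk₀ : (0 : ℝ) < k := by exact_mod_cast hk
  have hkθ : (k : ℝ) * (θ / (2 * k)) = θ / 2 := by field_simp
  have hhalf : θ / 2 ≤ f S := by
    rcases hcase with ⟨hSk, hfS, -⟩ | ⟨hgain, hθO, -⟩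
    · rwa [hSk, mul_div_assoc, hkθ] at hfS
    rcases le_or_gt θ 0 with hθ | hθ
    · linarith [hnonneg S]
    have hO := le_add_card_mul_of_marginal_le f hmono hsub (c := θ / (2 * k)) (by positivity)
      (fun e he => (hgain e he).le) Ostar
    have hcardθ : (Ostar.card : ℝ) * (θ / (2 * k)) ≤ θ / 2 := by
      rw [← hkθ]; gcongr
    linarith
  have hub : f Ostar ≤ (1 + α) * θ := hcase.elim (·.2.2) (·.2.2)
  rw [ge_iff_le, div_le_iff₀ (by positivity)]
  nlinarith

/-- Key ADT invariant: whether the threshold-greedy set `S` fills its cardinality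
budget (a) or stops due to small marginal gains (b), its value is at least
`f O* / (2(1+α))` whenever the threshold `θ` sandwiches the optimum up to `1+α`. -/
theorem stmt_5 {E : Type*} [Fintype E] [DecidableEq E]
    (f : Finset E → ℝ)
    (hnonneg : ∀ S, 0 ≤ f S)
    (hmono : ∀ A B : Finset E, A ⊆ B → f A ≤ f B)
    (hsub : ∀ A B : Finset E, f (A ∪ B) + f (A ∩ B) ≤ f A + f B)
    (hempty : f ∅ = 0) (k : ℕ) (hk : 1 ≤ k)
    (Ostar : Finset E) (hcard : Ostar.card ≤ k)
    (hopt : ∀ T : Finset E, T.card ≤ k → f T ≤ f Ostar)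
    (θ α : ℝ) (hα : 0 ≤ α)
    (S : Finset E)
    (hcase :
      (S.card = k ∧ (S.card : ℝ) * θ / (2 * k) ≤ f S ∧ f Ostar ≤ (1 + α) * θ) ∨
      ((∀ e : E, e ∉ S → f (insert e S) - f S < θ / (2 * k)) ∧
        θ ≤ f Ostar ∧ f Ostar ≤ (1 + α) * θ)) :
    f S ≥ f Ostar / (2 * (1 + α)) :=
  stmt_5_general f hnonneg hmono hsub k hk Ostar hcard θ α hα S hcase
end

section
/- Let f : 2^E → ℝ≥0 be monotone submodular with f(∅)=0, let O* be optimal for max{f(S) : |S| ≤ k}, ε ∈ (0,1), and let U ⊆ E with f(U ∪ {e}) − f(U) ≤ f(O*)/((1−ε)·e·k) for all e ∈ E \ U (here e denotes Euler's number). Then f(U) ≥ (1 − 1/(e(1−ε))) f(O*). -/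
/-!
Submodularity bounds the gain of adding a whole set `O*` to `U` by the sum of the single-element
gains, each of which is at most `f O* / ((1 - ε) e k)`. Since `|O*| ≤ k` and `f` is monotone,
`f O* - f U ≤ f (U ∪ O*) - f U ≤ f O* / ((1 - ε) e)`.
-/

section Submodular

variable {E : Type*} [DecidableEq E] {f : Finset E → ℝ}
  (hmono : ∀ A B : Finset E, A ⊆ B → f A ≤ f B)
  (hsub : ∀ A B : Finset E, f (A ∪ B) + f (A ∩ B) ≤ f A + f B)

include hmono hsub in
theorem marginal_gain_antitone {U A : Finset E} (hUA : U ⊆ A) (a : E) :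
    f (insert a A) - f A ≤ f (insert a U) - f U := by
  have hunion : A ∪ insert a U = insert a A := by
    rw [Finset.union_insert, Finset.union_eq_left.mpr hUA]
  have hinter : U ⊆ A ∩ insert a U :=
    Finset.subset_inter hUA (Finset.subset_insert a U)
  have := hsub A (insert a U)
  rw [hunion] at this
  linarith [hmono _ _ hinter]

include hmono hsub in
theorem union_sub_le_sum_marginal_gain (U S : Finset E) :
    f (U ∪ S) - f U ≤ ∑ a ∈ S, (f (insert a U) - f U) := by
  induction S using Finset.induction_on with
  | empty => simp
  | insert a S haS ih =>
    rw [Finset.sum_insert haS, Finset.union_insert]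
    linarith [marginal_gain_antitone hmono hsub (U.subset_union_left (s₂ := S)) a]

include hmono hsub in
theorem le_add_card_mul_of_marginal_gain_le {U : Finset E} {δ : ℝ} (hδ : 0 ≤ δ)
    (hgain : ∀ e, e ∉ U → f (insert e U) - f U ≤ δ) (S : Finset E) :
    f S ≤ f U + S.card * δ := by
  have hgain' : ∀ e ∈ S, f (insert e U) - f U ≤ δ := by
    intro e _
    by_cases he : e ∈ U
    · simpa [Finset.insert_eq_self.mpr he] using hδ
    · exact hgain e he
  calc f S ≤ f (U ∪ S) := hmono _ _ Finset.subset_union_right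
    _ ≤ f U + ∑ a ∈ S, (f (insert a U) - f U) := by
      linarith [union_sub_le_sum_marginal_gain hmono hsub U S]
    _ ≤ f U + S.card * δ := by
      have := Finset.sum_le_sum hgain'
      rw [Finset.sum_const, nsmul_eq_mul] at this
      linarith

end Submodular

theorem stmt_6_general {E : Type*} [DecidableEq E]
    (f : Finset E → ℝ)
    (hnonneg : ∀ S, 0 ≤ f S)
    (hmono : ∀ A B : Finset E, A ⊆ B → f A ≤ f B)
    (hsub : ∀ A B : Finset E, f (A ∪ B) + f (A ∩ B) ≤ f A + f B)
    (k : ℕ) (hk : 1 ≤ k)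
    (Ostar : Finset E) (hcard : Ostar.card ≤ k)
    (ε : ℝ) (hε : 0 < ε ∧ ε < 1)
    (U : Finset E)
    (hgain : ∀ e : E, e ∉ U →
      f (insert e U) - f U ≤ f Ostar / ((1 - ε) * Real.exp 1 * k)) :
    f U ≥ (1 - 1 / (Real.exp 1 * (1 - ε))) * f Ostar := by
  have h1ε : 0 < 1 - ε := by linarith [hε.2]
  have hk0 : (0 : ℝ) < k := by exact_mod_cast hk
  set δ := f Ostar / ((1 - ε) * Real.exp 1 * k)
  have hδ : 0 ≤ δ := div_nonneg (hnonneg _) (by positivity)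
  have hbound := le_add_card_mul_of_marginal_gain_le hmono hsub hδ hgain Ostar
  have hcardδ : (Ostar.card : ℝ) * δ ≤ k * δ :=
    mul_le_mul_of_nonneg_right (by exact_mod_cast hcard) hδ
  have hkδ : k * δ = f Ostar / (Real.exp 1 * (1 - ε)) := by
    simp only [δ]
    field_simp
  rw [ge_iff_le, sub_mul, one_mul, one_div_mul_eq_div]
  linarith

/-- Ineffective-threshold case of ADT: if all marginal gains over `U` are at most
`f O* / ((1-ε)·e·k)` then `f U ≥ (1 - 1/(e(1-ε))) f O*`. -/
theorem stmt_6 {E : Type*} [Fintype E] [DecidableEq E]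
    (f : Finset E → ℝ)
    (hnonneg : ∀ S, 0 ≤ f S)
    (hmono : ∀ A B : Finset E, A ⊆ B → f A ≤ f B)
    (hsub : ∀ A B : Finset E, f (A ∪ B) + f (A ∩ B) ≤ f A + f B)
    (hempty : f ∅ = 0) (k : ℕ) (hk : 1 ≤ k)
    (Ostar : Finset E) (hcard : Ostar.card ≤ k)
    (hopt : ∀ T : Finset E, T.card ≤ k → f T ≤ f Ostar)
    (ε : ℝ) (hε : 0 < ε ∧ ε < 1)
    (U : Finset E)
    (hgain : ∀ e : E, e ∉ U →
      f (insert e U) - f U ≤ f Ostar / ((1 - ε) * Real.exp 1 * k)) :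
    f U ≥ (1 - 1 / (Real.exp 1 * (1 - ε))) * f Ostar :=
  stmt_6_general f hnonneg hmono hsub k hk Ostar hcard ε hε U hgain
end

section
/- Let n be even, k = n/2, and c = 1/2 + δ for a constant δ ∈ (0, 1/2]. If n^{2Q} ≥ binom(n, n/2) / (n · max_{r ≥ cn/2} binom(n/2, r)^2), then Q = Ω(n / log n). More precisely, there exists a constant C(δ) > 0 such that binom(n, n/2) / Σ_{r=⌈cn/2⌉}^{n/2} binom(n/2, r)^2 ≥ 2^{C(δ) n} for all sufficiently large n, hence Q ≥ C(δ) n / (2 log₂ n). -/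
/-!
Chernoff's exponential-moment trick: for `t ≥ 1` every `r ≥ c m` has `t ^ (c m) ≤ t ^ r`, and bounding
one factor `binom(m, r) ≤ 2 ^ m` gives `Σ_{r ≥ c m} binom(m, r)² ≤ (2 (1 + t) / t ^ c) ^ m`.
For `c > 1/2` weighted AM-GM provides a `t > 1` with `1 + t < 2 t ^ c`, so this is `4 ^ m q ^ (-m)`
with `q > 1`, while `binom(2m, m) ≥ 4 ^ m / (2m + 1)`. The ratio is therefore at least
`q ^ m / (n + 1) ≥ 2 ^ (C n)`, and taking `log₂` of `n ^ (2Q) ≥ 2 ^ (C n)` bounds `Q`.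
-/

open Real Finset Filter

theorem sum_Icc_choose_sq_mul_pow_le (m r₀ : ℕ) {t : ℝ} (ht : 1 ≤ t) :
    (∑ r ∈ Icc r₀ m, (m.choose r : ℝ) ^ 2) * t ^ r₀ ≤ 2 ^ m * (1 + t) ^ m := by
  calc (∑ r ∈ Icc r₀ m, (m.choose r : ℝ) ^ 2) * t ^ r₀
      ≤ ∑ r ∈ Icc r₀ m, 2 ^ m * ((m.choose r : ℝ) * t ^ r) := by
        rw [sum_mul]
        refine sum_le_sum fun r hr => ?_
        have hchoose : (m.choose r : ℝ) ≤ 2 ^ m := by exact_mod_cast Nat.choose_le_two_pow m r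
        have htr : t ^ r₀ ≤ t ^ r := pow_le_pow_right₀ ht (mem_Icc.1 hr).1
        calc (m.choose r : ℝ) ^ 2 * t ^ r₀ = m.choose r * (m.choose r * t ^ r₀) := by ring
          _ ≤ _ := by gcongr
    _ ≤ ∑ r ∈ range (m + 1), 2 ^ m * ((m.choose r : ℝ) * t ^ r) := by
        refine sum_le_sum_of_subset_of_nonneg (fun r hr => ?_) (fun _ _ _ => by positivity)
        simpa [Nat.lt_succ_iff] using (mem_Icc.1 hr).2
    _ = 2 ^ m * (1 + t) ^ m := by
        rw [← mul_sum, add_comm 1 t, add_pow]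
        simp only [one_pow, mul_one, mul_comm]

theorem sum_Icc_choose_sq_le {m r₀ : ℕ} {c t : ℝ} (ht : 1 ≤ t) (hr : c * m ≤ r₀) :
    ∑ r ∈ Icc r₀ m, (m.choose r : ℝ) ^ 2 ≤ (2 * (1 + t) / t ^ c) ^ m := by
  have ht0 : 0 < t := one_pos.trans_le ht
  have hpow : (t ^ c) ^ m ≤ t ^ r₀ := by
    rw [← rpow_natCast, ← rpow_mul ht0.le, ← rpow_natCast t r₀]
    exact rpow_le_rpow_of_exponent_le ht hr
  rw [div_pow, mul_pow, le_div_iff₀ (by positivity)]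
  calc _ ≤ (∑ r ∈ Icc r₀ m, (m.choose r : ℝ) ^ 2) * t ^ r₀ := by gcongr
    _ ≤ _ := sum_Icc_choose_sq_mul_pow_le m r₀ ht

theorem sum_Icc_choose_sq_mul_le_centralBinom (m : ℕ) {c t : ℝ} (ht : 1 ≤ t) :
    (∑ r ∈ Icc ⌈c * m⌉₊ m, (m.choose r : ℝ) ^ 2) * (2 * t ^ c / (1 + t)) ^ m ≤
      (2 * m + 1) * (2 * m).choose m := by
  have ht0 : 0 < t := one_pos.trans_le ht
  have hcancel : (2 * (1 + t) / t ^ c) * (2 * t ^ c / (1 + t)) = 4 := by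
    field_simp
    ring
  calc _ ≤ (2 * (1 + t) / t ^ c) ^ m * (2 * t ^ c / (1 + t)) ^ m := by
        gcongr
        exact sum_Icc_choose_sq_le ht (Nat.le_ceil _)
    _ = 4 ^ m := by rw [← mul_pow, hcancel]
    _ ≤ _ := by exact_mod_cast Nat.four_pow_le_two_mul_add_one_mul_central_binom m

theorem exists_one_lt_add_lt_two_mul_rpow {c : ℝ} (hc : 1 / 2 < c) :
    ∃ t : ℝ, 1 < t ∧ 1 + t < 2 * t ^ c := by
  set a := (1 / 2 + min c 1) / 2
  have ha : 1 / 2 < a := by simp only [a]; have := lt_min hc one_half_lt_one; linarith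
  have hac : a < c := by simp only [a]; have := min_le_left c 1; linarith
  have ha1 : a < 1 := by simp only [a]; have := min_le_right c 1; linarith
  have ha0 : 0 < a := by linarith
  have ha1' : 0 < 1 - a := by linarith
  set x := 1 / a
  set y := 1 / (1 - a)
  have ht : 1 < y / x := by
    rw [one_lt_div (by positivity)]
    exact one_div_lt_one_div_of_lt ha1' (by linarith)
  -- weighted AM-GM with weights `a, 1 - a` at the points `1/a, 1/(1-a)`
  have hamgm : x ^ a * y ^ (1 - a) ≤ 2 := by
    have := geom_mean_le_arith_mean2_weighted ha0.le ha1'.le (by positivity : 0 ≤ x)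
      (by positivity : 0 ≤ y) (by ring)
    simp only [x, y] at this ⊢
    rwa [mul_one_div_cancel ha0.ne', mul_one_div_cancel ha1'.ne', one_add_one_eq_two] at this
  have hy : 1 + y / x = y := by simp only [x, y]; field_simp; ring
  have hx0 : 0 < x := by positivity
  have hy0 : 0 < y := by positivity
  clear_value x y
  refine ⟨y / x, ht, ?_⟩
  calc 1 + y / x = y ^ (1 - a) * y ^ a * (x ^ a / x ^ a) := by
        rw [← rpow_add hy0, div_self (rpow_pos_of_pos hx0 a).ne', hy]
        simp
    _ = x ^ a * y ^ (1 - a) * (y / x) ^ a := by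
        rw [div_rpow hy0.le hx0.le]; ring
    _ ≤ 2 * (y / x) ^ a := by gcongr
    _ < 2 * (y / x) ^ c := by gcongr; exact rpow_lt_rpow_of_exponent_lt ht hac

theorem eventually_add_one_le_two_rpow_mul {C : ℝ} (hC : 0 < C) :
    ∀ᶠ n : ℕ in atTop, (n : ℝ) + 1 ≤ 2 ^ (C * n) := by
  set k := C * log 2
  have hk : 0 < k := mul_pos hC (log_pos one_lt_two)
  filter_upwards [eventually_ge_atTop ⌈2 / k ^ 2⌉₊] with n hn
  have hn : 2 ≤ k ^ 2 * n := by
    rw [← div_le_iff₀' (by positivity)]; exact Nat.ceil_le.1 hn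
  rw [rpow_def_of_pos two_pos]
  calc (n : ℝ) + 1 ≤ 1 + k * n + (k * n) ^ 2 / 2 := by nlinarith [sq_nonneg (k * n)]
    _ ≤ exp (k * n) := quadratic_le_exp_of_nonneg (by positivity)
    _ = _ := by simp only [k]; ring_nf

theorem div_logb_le_of_two_rpow_le_pow {x y : ℝ} {k : ℕ} (hx : 1 < x) (h : (2 : ℝ) ^ y ≤ x ^ k) :
    y / logb 2 x ≤ k := by
  have := logb_le_logb_of_le one_lt_two (rpow_pos_of_pos two_pos y) h
  rw [logb_rpow two_pos (by norm_num), logb_pow] at this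
  rwa [div_le_iff₀ (logb_pos one_lt_two hx)]

/-- Counting step of the deterministic query lower bound: with `c = 1/2 + δ`,
there is `C(δ) > 0` such that for all sufficiently large even `n`,
`binom(n, n/2) / Σ_{r ≥ ⌈c·n/2⌉} binom(n/2, r)² ≥ 2^{C n}`, and hence any `Q`
with `n^{2Q} ≥ binom(n, n/2) / Σ_{r ≥ ⌈c·n/2⌉} binom(n/2, r)²` satisfies
`Q ≥ C·n / (2 log₂ n)`, i.e. `Q = Ω(n / log n)`. -/
theorem stmt_10 (δ : ℝ) (hδ : 0 < δ ∧ δ ≤ 1 / 2) :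
    ∃ C : ℝ, 0 < C ∧ ∃ N : ℕ, ∀ n : ℕ, N ≤ n → Even n →
      ((n.choose (n / 2) : ℝ) /
          (∑ r ∈ Finset.Icc ⌈(1 / 2 + δ) * ((n : ℝ) / 2)⌉₊ (n / 2),
            (((n / 2).choose r : ℝ)) ^ 2) ≥ (2 : ℝ) ^ (C * n)) ∧
      ∀ Q : ℕ,
        ((n : ℝ) ^ (2 * Q) ≥
          (n.choose (n / 2) : ℝ) /
            (∑ r ∈ Finset.Icc ⌈(1 / 2 + δ) * ((n : ℝ) / 2)⌉₊ (n / 2),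
              (((n / 2).choose r : ℝ)) ^ 2)) →
        (Q : ℝ) ≥ C * n / (2 * Real.logb 2 n) := by
  obtain ⟨hδ0, hδ2⟩ := hδ
  set c := 1 / 2 + δ with hc
  obtain ⟨t, ht, htc⟩ := exists_one_lt_add_lt_two_mul_rpow (c := c) (by rw [hc]; linarith)
  set q := 2 * t ^ c / (1 + t)
  have hq : 1 < q := (one_lt_div (by linarith)).2 htc
  set C := logb 2 q / 4
  have hC : 0 < C := div_pos (logb_pos one_lt_two hq) four_pos
  obtain ⟨N, hN⟩ := eventually_atTop.1 (eventually_add_one_le_two_rpow_mul hC)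
  refine ⟨C, hC, max N 2, fun n hn ⟨m, hm⟩ => ?_⟩
  have hnm : n / 2 = m := by omega
  have hn_real : (n : ℝ) = 2 * m := by rw [hm]; push_cast; ring
  rw [hnm, show (n : ℝ) / 2 = m by rw [hn_real]; ring]
  set S := ∑ r ∈ Icc ⌈c * m⌉₊ m, (m.choose r : ℝ) ^ 2
  have hS : 0 < S := by
    have hceil : ⌈c * m⌉₊ ≤ m := Nat.ceil_le.2 (mul_le_of_le_one_left m.cast_nonneg (by rw [hc]; linarith))
    have := single_le_sum (f := fun r => (m.choose r : ℝ) ^ 2) (fun _ _ => by positivity)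
      (mem_Icc.2 ⟨hceil, le_rfl⟩)
    simp only [Nat.choose_self, Nat.cast_one, one_pow] at this
    exact one_pos.trans_le this
  have hqm : q ^ m = 2 ^ (C * n) * 2 ^ (C * n) := by
    rw [← rpow_add two_pos, show C * n + C * n = logb 2 q * m by rw [hn_real]; ring,
      rpow_mul two_pos.le, rpow_logb two_pos (by norm_num) (by linarith), rpow_natCast]
  have hbound : 2 ^ (C * n) ≤ n.choose m / S := by
    have hsum := sum_Icc_choose_sq_mul_le_centralBinom m (c := c) ht.le
    rw [show 2 * m = n by omega, ← hn_real] at hsum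
    have hpoly := hN n (le_of_max_le_left hn)
    rw [le_div_iff₀ hS]
    refine le_of_mul_le_mul_left ?_ (by positivity : (0 : ℝ) < n + 1)
    calc ((n : ℝ) + 1) * (2 ^ (C * n) * S) ≤ 2 ^ (C * n) * (2 ^ (C * n) * S) := by gcongr
      _ = S * q ^ m := by rw [hqm]; ring
      _ ≤ _ := hsum
  refine ⟨hbound, fun Q hQ => ?_⟩
  have hlog := div_logb_le_of_two_rpow_le_pow (by norm_cast; omega) (hbound.trans hQ)
  push_cast at hlog
  rw [ge_iff_le, mul_comm 2, ← div_div]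
  linarith
end

section
/- Let f : 2^E → ℝ≥0 be monotone submodular, let S = {e₁,…,e_s} be built by adding elements in order with f(S^(j)) − f(S^(j−1)) ≥ ρ·c(e_j) for each j (where S^(j) = {e₁,…,e_j}, c : E → ℝ≥0), and let S̃ = {e_{i₁},…,e_{i_{s'}}} ⊆ S with i₁ < i₂ < … < i_{s'}. Then f(S̃) ≥ ρ · Σ_{j=1}^{s'} c(e_{i_j}). -/
/-! Adding an element to a subset of a set gains at least as much as adding it to the set itself
(diminishing returns). Each chosen element `e_{i_j}` is added to `S̃^(j-1) ⊆ S^(i_j - 1)`, so its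
gain in the telescoping sum for `f S̃` dominates its gain `≥ ρ c(e_{i_j})` in the construction of
`S`. -/

open Finset

theorem sub_le_sub_insert_of_subset {E : Type*} [DecidableEq E] {f : Finset E → ℝ}
    (hmono : Monotone f)
    (hsub : ∀ A B : Finset E, f (A ∪ B) + f (A ∩ B) ≤ f A + f B)
    {X A : Finset E} (hXA : X ⊆ A) (x : E) :
    f (insert x A) - f A ≤ f (insert x X) - f X := by
  have hunion : insert x X ∪ A = insert x A := by
    rw [insert_union, union_eq_right.mpr hXA]
  have hinter : f X ≤ f (insert x X ∩ A) := hmono (subset_inter (subset_insert x X) hXA)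
  have := hsub (insert x X) A
  rw [hunion] at this
  linarith

theorem image_Icc_subset_image_Icc_sub_one {E : Type*} [DecidableEq E] (e : ℕ → E)
    {idx : ℕ → ℕ} (hidx : StrictMono idx) {n : ℕ} (hpos : ∀ t ∈ Icc 1 n, 1 ≤ idx t) :
    (Icc 1 n).image (fun t => e (idx t)) ⊆ (Icc 1 (idx (n + 1) - 1)).image e := by
  intro y hy
  obtain ⟨t, ht, rfl⟩ := mem_image.mp hy
  have hlt : idx t < idx (n + 1) := hidx (Nat.lt_succ_of_le (mem_Icc.mp ht).2)
  exact mem_image_of_mem e (mem_Icc.mpr ⟨hpos t ht, by omega⟩)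

theorem stmt_16_general {E : Type*} [DecidableEq E]
    (f : Finset E → ℝ)
    (hmono : ∀ A B : Finset E, A ⊆ B → f A ≤ f B)
    (hsub : ∀ A B : Finset E, f (A ∪ B) + f (A ∩ B) ≤ f A + f B)
    (hempty : f ∅ = 0)
    (c : E → ℝ) (ρ : ℝ)
    (s s' : ℕ) (e : ℕ → E) (idx : ℕ → ℕ)
    (hidx : StrictMono idx)
    (hrange : ∀ j, 1 ≤ j → j ≤ s' → 1 ≤ idx j ∧ idx j ≤ s)
    (hstep : ∀ j, 1 ≤ j → j ≤ s →
      f ((Finset.Icc 1 j).image e) - f ((Finset.Icc 1 (j - 1)).image e) ≥ ρ * c (e j)) :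
    f ((Finset.Icc 1 s').image (fun t => e (idx t))) ≥
      ρ * ∑ j ∈ Finset.Icc 1 s', c (e (idx j)) := by
  induction s' with
  | zero => simp [hempty]
  | succ n ih =>
    have hprev := ih fun j h1 h2 => hrange j h1 (by omega)
    obtain ⟨hk1, hks⟩ := hrange (n + 1) (by omega) le_rfl
    have hprefix := image_Icc_subset_image_Icc_sub_one e hidx (n := n)
      fun t ht => (hrange t (mem_Icc.mp ht).1 (Nat.le_succ_of_le (mem_Icc.mp ht).2)).1
    have hgain := sub_le_sub_insert_of_subset (fun A B => hmono A B) hsub hprefix (e (idx (n + 1)))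
    rw [← image_insert, insert_Icc_sub_one_right_eq_Icc hk1] at hgain
    rw [sum_Icc_succ_top (by omega), mul_add, ← insert_Icc_right_eq_Icc_add_one (by omega),
      image_insert]
    linarith [hstep (idx (n + 1)) hk1 hks]

/-- Backtracking-threshold lemma: if `S = {e₁, …, e_s}` was built with each step
gaining at least `ρ · c(e_j)`, then any subsequence `S̃ = {e_{i₁}, …, e_{i_{s'}}}`
(with `i₁ < … < i_{s'}`) satisfies `f S̃ ≥ ρ · Σ_j c(e_{i_j})`. -/
theorem stmt_16 {E : Type*} [DecidableEq E]
    (f : Finset E → ℝ)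
    (hmono : ∀ A B : Finset E, A ⊆ B → f A ≤ f B)
    (hsub : ∀ A B : Finset E, f (A ∪ B) + f (A ∩ B) ≤ f A + f B)
    (hempty : f ∅ = 0)
    (c : E → ℝ) (hc : ∀ e, 0 ≤ c e) (ρ : ℝ) (hρ : 0 ≤ ρ)
    (s s' : ℕ) (e : ℕ → E) (idx : ℕ → ℕ)
    (hidx : StrictMono idx)
    (hrange : ∀ j, 1 ≤ j → j ≤ s' → 1 ≤ idx j ∧ idx j ≤ s)
    (hstep : ∀ j, 1 ≤ j → j ≤ s →
      f ((Finset.Icc 1 j).image e) - f ((Finset.Icc 1 (j - 1)).image e) ≥ ρ * c (e j)) :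
    f ((Finset.Icc 1 s').image (fun t => e (idx t))) ≥
      ρ * ∑ j ∈ Finset.Icc 1 s', c (e (idx j)) :=
  stmt_16_general f hmono hsub hempty c ρ s s' e idx hidx hrange hstep
end

section
/- Let f : 2^E → ℝ≥0 be monotone submodular, d ≥ 1, C_i : E → ℝ≥0 nonneg. cost functions, O* ⊆ E with Σ_{e∈O*} C_i(e) ≤ 1 for all i, O*_b ⊆ O* the set of elements e with Σ_{i=1}^d C_i(e) > 1/2 (big elements of O*), and S ⊆ E a set such that f(S∪{e}) − f(S) ≤ θ·Σ_{i=1}^d C_i(e) for every e ∈ O* \ (O*_b ∪ S). Then f(S ∪ (O* \ O*_b)) − f(S) ≤ θ·(d − |O*_b|/2). -/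
/-!
Submodularity bounds the joint gain of `O* \ O*_b` over `S` by the sum of the single-element
gains, each of which is at most `θ` times the total cost of the element (or zero, if it already
lies in `S`). The total cost of `O*` is at most `d`, one unit per budget, while every big element
carries more than `1/2` of it, so removing `O*_b` saves at least `|O*_b| / 2`.
-/

open Finset

theorem submodular_union_sub_le_sum_marginal {E : Type*} [DecidableEq E]
    (f : Finset E → ℝ) (hsub : ∀ A B : Finset E, f (A ∪ B) + f (A ∩ B) ≤ f A + f B)
    (S T : Finset E) :
    f (S ∪ T) - f S ≤ ∑ e ∈ T, (f (insert e S) - f S) := by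
  induction T using Finset.induction_on with
  | empty => simp
  | @insert a T haT ih =>
    have hunion : insert a S ∪ (S ∪ T) = S ∪ insert a T := by
      ext x; simp only [mem_union, mem_insert]; tauto
    have hinter : insert a S ∩ (S ∪ T) = S := by
      ext x; simp only [mem_inter, mem_insert, mem_union]
      constructor
      · rintro ⟨rfl | hxS, hxST⟩
        · exact hxST.resolve_right haT
        · exact hxS
      · exact fun hxS => ⟨Or.inr hxS, Or.inl hxS⟩
    have := hsub (insert a S) (S ∪ T)
    rw [hunion, hinter] at this
    rw [sum_insert haT]
    linarith

theorem sum_sum_le_card_of_sum_le_one {ι E : Type*} [Fintype ι]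
    (C : ι → E → ℝ) (s : Finset E) (hbudget : ∀ i, ∑ e ∈ s, C i e ≤ 1) :
    ∑ e ∈ s, ∑ i, C i e ≤ Fintype.card ι := by
  rw [sum_comm]
  simpa using sum_le_card_nsmul univ (fun i => ∑ e ∈ s, C i e) 1 fun i _ => hbudget i

theorem card_div_two_le_sum_of_half_lt {E : Type*} (w : E → ℝ) (s : Finset E)
    (hbig : ∀ e ∈ s, 1 / 2 < w e) :
    (s.card : ℝ) / 2 ≤ ∑ e ∈ s, w e := by
  have := card_nsmul_le_sum s w (1 / 2) fun e he => (hbig e he).le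
  rw [nsmul_eq_mul] at this
  linarith

theorem stmt_19_general {E : Type*} [DecidableEq E]
    (f : Finset E → ℝ)
    (hsub : ∀ A B : Finset E, f (A ∪ B) + f (A ∩ B) ≤ f A + f B)
    (d : ℕ)
    (C : Fin d → E → ℝ) (hC : ∀ i e, 0 ≤ C i e)
    (Ostar : Finset E) (hbudget : ∀ i : Fin d, ∑ e ∈ Ostar, C i e ≤ 1)
    (Ob : Finset E) (hObsub : Ob ⊆ Ostar)
    (hOb : ∀ e ∈ Ostar, (e ∈ Ob ↔ 1 / 2 < ∑ i : Fin d, C i e))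
    (θ : ℝ) (hθ : 0 ≤ θ)
    (S : Finset E)
    (hgain : ∀ e ∈ Ostar \ (Ob ∪ S),
      f (insert e S) - f S ≤ θ * ∑ i : Fin d, C i e) :
    f (S ∪ (Ostar \ Ob)) - f S ≤ θ * ((d : ℝ) - (Ob.card : ℝ) / 2) := by
  have hmarginal : ∀ e ∈ Ostar \ Ob, f (insert e S) - f S ≤ θ * ∑ i, C i e := by
    intro e he
    obtain ⟨heO, heOb⟩ := mem_sdiff.mp he
    by_cases heS : e ∈ S
    · rw [insert_eq_of_mem heS, sub_self]
      exact mul_nonneg hθ (sum_nonneg fun i _ => hC i e)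
    · exact hgain e (mem_sdiff.mpr ⟨heO, by simp [heOb, heS]⟩)
  have htotal := sum_sum_le_card_of_sum_le_one C Ostar hbudget
  have hbig := card_div_two_le_sum_of_half_lt (fun e => ∑ i, C i e) Ob
    fun e he => (hOb e (hObsub he)).mp he
  rw [Fintype.card_fin] at htotal
  calc f (S ∪ (Ostar \ Ob)) - f S
      ≤ ∑ e ∈ Ostar \ Ob, (f (insert e S) - f S) :=
        submodular_union_sub_le_sum_marginal f hsub S _
    _ ≤ ∑ e ∈ Ostar \ Ob, θ * ∑ i, C i e := sum_le_sum hmarginal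
    _ = θ * (∑ e ∈ Ostar, ∑ i, C i e - ∑ e ∈ Ob, ∑ i, C i e) := by
        rw [← mul_sum, sum_sdiff_eq_sub hObsub]
    _ ≤ θ * ((d : ℝ) - (Ob.card : ℝ) / 2) :=
        mul_le_mul_of_nonneg_left (by linarith) hθ

/-- Loss bound in the backtracking-threshold analysis: if every element of
`O* \ (O*_b ∪ S)` has marginal gain over `S` at most `θ · Σ_i C_i(e)`, then
`f (S ∪ (O* \ O*_b)) - f S ≤ θ (d - |O*_b|/2)`. -/
theorem stmt_19 {E : Type*} [DecidableEq E]
    (f : Finset E → ℝ)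
    (hnonneg : ∀ S, 0 ≤ f S)
    (hmono : ∀ A B : Finset E, A ⊆ B → f A ≤ f B)
    (hsub : ∀ A B : Finset E, f (A ∪ B) + f (A ∩ B) ≤ f A + f B)
    (d : ℕ) (hd : 1 ≤ d)
    (C : Fin d → E → ℝ) (hC : ∀ i e, 0 ≤ C i e)
    (Ostar : Finset E) (hbudget : ∀ i : Fin d, ∑ e ∈ Ostar, C i e ≤ 1)
    (Ob : Finset E) (hObsub : Ob ⊆ Ostar)
    (hOb : ∀ e ∈ Ostar, (e ∈ Ob ↔ 1 / 2 < ∑ i : Fin d, C i e))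
    (θ : ℝ) (hθ : 0 ≤ θ)
    (S : Finset E)
    (hgain : ∀ e ∈ Ostar \ (Ob ∪ S),
      f (insert e S) - f S ≤ θ * ∑ i : Fin d, C i e) :
    f (S ∪ (Ostar \ Ob)) - f S ≤ θ * ((d : ℝ) - (Ob.card : ℝ) / 2) :=
  stmt_19_general f hsub d C hC Ostar hbudget Ob hObsub hOb θ hθ S hgain
end
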